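/- arXiv:1802.03059 — 3 statements merged into one kernel-verified Lean document; each statement's English description precedes it below -/
import Mathlib

section
/- For q > 0, the function a ↦ h(a) = cosh(a) · ∫_1^∞ (v^{2q}-1)^{-1/2} (cosh²(a)·v² - 1)^{-1/2} dv is strictly decreasing on (0, ∞); indeed its derivative equals −sinh(a) · ∫_1^∞ (v^{2q}-1)^{-1/2} (cosh²(a)·v² - 1)^{-3/2} dv, which is negative. -/
open Real MeasureTheory Set

/-!
Differentiating under the integral sign, `∂ₐ (cosh a · (cosh² a · v² - 1)^(-1/2))
= -sinh a · (cosh² a · v² - 1)^(-3/2)`. Locally in `a > 0` both integrands are dominated by a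
multiple of `(v^(2q) - 1)^(-1/2) / v`, which is integrable on `(1, ∞)`: it behaves like
`(v - 1)^(-1/2)` near `1` and like `v^(-q-1)` at infinity. The derivative is then minus a positive
quantity, so `h` is strictly decreasing.
-/

lemma one_lt_sq_mul_sq {c v : ℝ} (hc : 1 ≤ c) (hv : 1 < v) : 1 < c ^ 2 * v ^ 2 :=
  one_lt_mul_of_le_of_lt (one_le_pow₀ hc) (one_lt_pow₀ hv two_ne_zero)

lemma half_mul_sub_one_le_rpow_sub_one {r v : ℝ} (hr : 0 ≤ r) (hv : 1 < v) (hv2 : v ≤ 2) :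
    r / 2 * (v - 1) ≤ v ^ r - 1 := by
  have hv0 : 0 < v := by linarith
  have hlog : (v - 1) / 2 ≤ log v := calc
    (v - 1) / 2 ≤ (v - 1) / v := div_le_div_of_nonneg_left (by linarith) hv0 hv2
    _ = 1 - v⁻¹ := by field_simp
    _ ≤ log v := one_sub_inv_le_log_of_pos hv0
  calc r / 2 * (v - 1) = r * ((v - 1) / 2) := by ring
    _ ≤ r * log v := mul_le_mul_of_nonneg_left hlog hr
    _ ≤ exp (log v * r) - 1 := by linarith [add_one_le_exp (log v * r)]
    _ = v ^ r - 1 := by rw [rpow_def_of_pos hv0]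

lemma one_sub_inv_two_rpow_mul_le {r v : ℝ} (hr : 0 ≤ r) (hv : 2 ≤ v) :
    (1 - (2 ^ r)⁻¹) * v ^ r ≤ v ^ r - 1 := by
  have h2 : (0 : ℝ) < 2 ^ r := by positivity
  have hle : (2 : ℝ) ^ r ≤ v ^ r := rpow_le_rpow (by norm_num) hv hr
  have : 1 ≤ v ^ r * (2 ^ r)⁻¹ := by rwa [le_mul_inv_iff₀ h2, one_mul]
  linarith [show (1 - (2 ^ r)⁻¹) * v ^ r = v ^ r - v ^ r * (2 ^ r)⁻¹ by ring]

lemma integrableOn_Ioc_rpow_sub_one_rpow_neg_half {r : ℝ} (hr : 0 < r) :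
    IntegrableOn (fun v : ℝ => (v ^ r - 1) ^ (-(1 : ℝ) / 2)) (Ioc 1 2) := by
  have hsing : IntegrableOn (fun v : ℝ => (r / 2) ^ (-(1 : ℝ) / 2) * (v - 1) ^ (-(1 : ℝ) / 2))
      (Ioc 1 2) := by
    have h := (intervalIntegral.intervalIntegrable_rpow' (a := 0) (b := 1)
      (by norm_num : (-1 : ℝ) < -(1 : ℝ) / 2)).comp_sub_right 1
    rw [intervalIntegrable_iff_integrableOn_Ioc_of_le (by norm_num)] at h
    norm_num at h ⊢
    exact h.const_mul _
  refine hsing.mono' (by fun_prop : Measurable _).aestronglyMeasurable ((ae_restrict_iff' measurableSet_Ioc).2 (.of_forall ?_))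
  rintro v ⟨hv1, hv2⟩
  have hpos : 0 < v ^ r - 1 := sub_pos.2 (one_lt_rpow hv1 hr)
  rw [norm_of_nonneg (rpow_nonneg hpos.le _), ← mul_rpow (by positivity) (by linarith)]
  exact rpow_le_rpow_of_nonpos (by have := sub_pos.2 hv1; positivity)
    (half_mul_sub_one_le_rpow_sub_one hr.le hv1 hv2) (by norm_num)

lemma integrableOn_Ioi_two_rpow_sub_one_rpow_neg_half_div {r : ℝ} (hr : 0 < r) :
    IntegrableOn (fun v : ℝ => (v ^ r - 1) ^ (-(1 : ℝ) / 2) / v) (Ioi 2) := by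
  set k : ℝ := 1 - (2 ^ r)⁻¹
  have hk : 0 < k := sub_pos.2 (inv_lt_one_of_one_lt₀ (one_lt_rpow one_lt_two hr))
  have htail : IntegrableOn (fun v : ℝ => k ^ (-(1 : ℝ) / 2) * v ^ (-(r / 2) - 1)) (Ioi 2) :=
    (integrableOn_Ioi_rpow_of_lt (by linarith) two_pos).const_mul _
  refine htail.mono' (by fun_prop : Measurable _).aestronglyMeasurable ((ae_restrict_iff' measurableSet_Ioi).2 (.of_forall ?_))
  intro v (hv : 2 < v)
  have hv0 : 0 < v := by linarith
  have hpos : 0 < v ^ r - 1 := sub_pos.2 (one_lt_rpow (by linarith) hr)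
  have hbound : (v ^ r - 1) ^ (-(1 : ℝ) / 2) ≤ k ^ (-(1 : ℝ) / 2) * v ^ (-(r / 2)) := by
    rw [show v ^ (-(r / 2)) = (v ^ r) ^ (-(1 : ℝ) / 2) by rw [← rpow_mul hv0.le]; ring_nf,
      ← mul_rpow hk.le (by positivity)]
    exact rpow_le_rpow_of_nonpos (by positivity) (one_sub_inv_two_rpow_mul_le hr.le hv.le)
      (by norm_num)
  rw [norm_of_nonneg (by positivity), rpow_sub hv0, rpow_one, mul_div_assoc']
  exact div_le_div_of_nonneg_right hbound hv0.le

lemma integrableOn_Ioi_rpow_sub_one_rpow_neg_half_div {r : ℝ} (hr : 0 < r) :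
    IntegrableOn (fun v : ℝ => (v ^ r - 1) ^ (-(1 : ℝ) / 2) / v) (Ioi 1) := by
  rw [← Ioc_union_Ioi_eq_Ioi one_le_two]
  refine IntegrableOn.union ?_ (integrableOn_Ioi_two_rpow_sub_one_rpow_neg_half_div hr)
  simp_rw [div_eq_mul_inv]
  refine (integrableOn_Ioc_rpow_sub_one_rpow_neg_half hr).mul_bdd (c := 1) (by fun_prop)
    ((ae_restrict_iff' measurableSet_Ioc).2 (.of_forall ?_))
  rintro v ⟨hv1, -⟩
  rw [norm_inv, norm_of_nonneg (by linarith)]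
  exact inv_le_one_of_one_le₀ hv1.le

lemma integrableOn_Ioi_rpow_sub_one_rpow_neg_half_mul_rpow {r c p : ℝ} (hr : 0 < r) (hc : 1 < c)
    (hp : p ≤ -(1 : ℝ) / 2) :
    IntegrableOn (fun v : ℝ => (v ^ r - 1) ^ (-(1 : ℝ) / 2) * (c ^ 2 * v ^ 2 - 1) ^ p) (Ioi 1) := by
  have hc2 : 0 < c ^ 2 - 1 := by nlinarith
  refine ((integrableOn_Ioi_rpow_sub_one_rpow_neg_half_div hr).const_mul ((c ^ 2 - 1) ^ p)).mono'
    (by fun_prop : Measurable _).aestronglyMeasurable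
    ((ae_restrict_iff' measurableSet_Ioi).2 (.of_forall ?_))
  intro v (hv : 1 < v)
  have hv0 : 0 < v := by linarith
  have hw : 0 ≤ (v ^ r - 1) ^ (-(1 : ℝ) / 2) := rpow_nonneg (sub_pos.2 (one_lt_rpow hv hr)).le _
  have hbound : (c ^ 2 * v ^ 2 - 1) ^ p ≤ (c ^ 2 - 1) ^ p / v := calc
    (c ^ 2 * v ^ 2 - 1) ^ p ≤ ((c ^ 2 - 1) * v ^ 2) ^ p :=
      rpow_le_rpow_of_nonpos (by positivity) (by nlinarith [one_lt_pow₀ hv two_ne_zero])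
        (by linarith)
    _ = (c ^ 2 - 1) ^ p * v ^ (2 * p) := by
      rw [mul_rpow hc2.le (by positivity), ← rpow_natCast v 2, ← rpow_mul hv0.le]; norm_num
    _ ≤ (c ^ 2 - 1) ^ p * v ^ (-1 : ℝ) := by
      gcongr
      · exact hv.le
      · linarith
    _ = (c ^ 2 - 1) ^ p / v := by rw [rpow_neg_one, div_eq_mul_inv]
  have hG : 0 ≤ (c ^ 2 * v ^ 2 - 1) ^ p :=
    rpow_nonneg (sub_pos.2 (one_lt_sq_mul_sq hc.le hv)).le _
  rw [norm_of_nonneg (mul_nonneg hw hG)]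
  calc (v ^ r - 1) ^ (-(1 : ℝ) / 2) * (c ^ 2 * v ^ 2 - 1) ^ p
      ≤ (v ^ r - 1) ^ (-(1 : ℝ) / 2) * ((c ^ 2 - 1) ^ p / v) := by gcongr
    _ = (c ^ 2 - 1) ^ p * ((v ^ r - 1) ^ (-(1 : ℝ) / 2) / v) := by ring

lemma integral_rpow_sub_one_rpow_neg_half_mul_rpow_pos {r c p : ℝ} (hr : 0 < r) (hc : 1 < c)
    (hp : p ≤ -(1 : ℝ) / 2) :
    0 < ∫ v in Ioi 1, (v ^ r - 1) ^ (-(1 : ℝ) / 2) * (c ^ 2 * v ^ 2 - 1) ^ p := by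
  have hpos : ∀ v ∈ Ioi (1 : ℝ), 0 < (v ^ r - 1) ^ (-(1 : ℝ) / 2) * (c ^ 2 * v ^ 2 - 1) ^ p :=
    fun v (hv : 1 < v) => mul_pos (rpow_pos_of_pos (sub_pos.2 (one_lt_rpow hv hr)) _)
      (rpow_pos_of_pos (sub_pos.2 (one_lt_sq_mul_sq hc.le hv)) _)
  rw [setIntegral_pos_iff_support_of_nonneg_ae
    ((ae_restrict_iff' measurableSet_Ioi).2 (.of_forall fun v hv => (hpos v hv).le))
    (integrableOn_Ioi_rpow_sub_one_rpow_neg_half_mul_rpow hr hc hp)]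
  exact (Measure.measure_Ioi_pos volume (1 : ℝ)).trans_le (measure_mono fun v hv => ⟨(hpos v hv).ne', hv⟩)

lemma hasDerivAt_cosh_mul_rpow_neg_half {v x : ℝ} (hx : 0 < cosh x ^ 2 * v ^ 2 - 1) :
    HasDerivAt (fun y => cosh y * (cosh y ^ 2 * v ^ 2 - 1) ^ (-(1 : ℝ) / 2))
      (-sinh x * (cosh x ^ 2 * v ^ 2 - 1) ^ (-(3 : ℝ) / 2)) x := by
  have hG := ((((hasDerivAt_cosh x).fun_pow 2).mul_const (v ^ 2)).sub_const 1).rpow_const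
    (p := -(1 : ℝ) / 2) (Or.inl hx.ne')
  refine ((hasDerivAt_cosh x).mul hG).congr_deriv ?_
  set G := cosh x ^ 2 * v ^ 2 - 1
  have hsplit : G ^ (-(1 : ℝ) / 2) = G * G ^ (-(3 : ℝ) / 2) := by
    rw [← rpow_one_add' hx.le (by norm_num)]; norm_num
  rw [show -(1 : ℝ) / 2 - 1 = -(3 : ℝ) / 2 by norm_num, hsplit]
  simp only [G]
  ring

lemma hasDerivAt_cosh_mul_integral {r a : ℝ} (hr : 0 < r) (ha : 0 < a) :
    HasDerivAt (fun x => cosh x *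
        ∫ v in Ioi 1, (v ^ r - 1) ^ (-(1 : ℝ) / 2) * (cosh x ^ 2 * v ^ 2 - 1) ^ (-(1 : ℝ) / 2))
      (-sinh a *
        ∫ v in Ioi 1, (v ^ r - 1) ^ (-(1 : ℝ) / 2) * (cosh a ^ 2 * v ^ 2 - 1) ^ (-(3 : ℝ) / 2))
      a := by
  set w : ℝ → ℝ := fun v => (v ^ r - 1) ^ (-(1 : ℝ) / 2)
  set G : ℝ → ℝ → ℝ := fun x v => cosh x ^ 2 * v ^ 2 - 1
  have hG : ∀ x, ∀ v ∈ Ioi (1 : ℝ), 0 < G x v := fun x v hv =>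
    sub_pos.2 (one_lt_sq_mul_sq (one_le_cosh x) hv)
  have hcosh : ∀ {x}, 0 < x → 1 < cosh x := fun hx => one_lt_cosh.2 hx.ne'
  -- on `ball a (a / 2)` the derivative is dominated through `sinh x ≤ sinh (2a)`, `cosh x ≥ cosh (a/2)`
  have key := hasDerivAt_integral_of_dominated_loc_of_deriv_le (μ := volume.restrict (Ioi 1))
    (F := fun x v => cosh x * (w v * G x v ^ (-(1 : ℝ) / 2)))
    (F' := fun x v => -sinh x * (w v * G x v ^ (-(3 : ℝ) / 2)))
    (bound := fun v => sinh (2 * a) * (w v * G (a / 2) v ^ (-(3 : ℝ) / 2)))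
    (Metric.ball_mem_nhds a (half_pos ha))
    (.of_forall fun x => (by fun_prop : Measurable _).aestronglyMeasurable)
    ((integrableOn_Ioi_rpow_sub_one_rpow_neg_half_mul_rpow hr (hcosh ha) le_rfl).const_mul _)
    (by fun_prop : Measurable _).aestronglyMeasurable ?bound
    ((integrableOn_Ioi_rpow_sub_one_rpow_neg_half_mul_rpow hr (hcosh (half_pos ha))
      (by norm_num)).const_mul _)
    ((ae_restrict_iff' measurableSet_Ioi).2 (.of_forall fun v hv x _ => ?deriv))
  case deriv =>
    refine ((hasDerivAt_cosh_mul_rpow_neg_half (hG x v hv)).const_mul (w v)).congr_deriv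
      (by ring) |>.congr_of_eventuallyEq (.of_forall fun y => ?_)
    ring
  case bound =>
    refine (ae_restrict_iff' measurableSet_Ioi).2 (.of_forall fun v hv x hx => ?_)
    obtain ⟨hx1, hx2⟩ : a - a / 2 < x ∧ x < a + a / 2 := by rwa [ball_eq_Ioo] at hx
    have hx0 : 0 < x := by linarith
    have hw : 0 ≤ w v := rpow_nonneg (sub_pos.2 (one_lt_rpow (show 1 < v from hv) hr)).le _
    have hGle : G x v ^ (-(3 : ℝ) / 2) ≤ G (a / 2) v ^ (-(3 : ℝ) / 2) := by
      refine rpow_le_rpow_of_nonpos (hG _ v hv) ?_ (by norm_num)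
      have : cosh (a / 2) ≤ cosh x := by
        rw [cosh_le_cosh, abs_of_pos (half_pos ha), abs_of_pos hx0]; linarith
      simp only [G]
      gcongr
    rw [norm_mul, norm_neg, norm_of_nonneg (sinh_pos_iff.2 hx0).le,
      norm_of_nonneg (mul_nonneg hw (rpow_nonneg (hG x v hv).le _))]
    gcongr
    · exact mul_nonneg hw (rpow_nonneg (hG x v hv).le _)
    · exact sinh_le_sinh.2 (by linarith)
  simp only [integral_const_mul] at key
  exact key.2

theorem stmt_3 (q : ℝ) (hq : 0 < q)
    (h : ℝ → ℝ)
    (hdef : ∀ a : ℝ, h a = Real.cosh a *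
      ∫ v in Ioi (1 : ℝ), (v ^ (2 * q) - 1) ^ (-(1 : ℝ) / 2) *
        ((Real.cosh a) ^ 2 * v ^ 2 - 1) ^ (-(1 : ℝ) / 2)) :
    StrictAntiOn h (Ioi 0) ∧
    ∀ a ∈ Ioi (0 : ℝ),
      HasDerivAt h
        (-(Real.sinh a) * ∫ v in Ioi (1 : ℝ), (v ^ (2 * q) - 1) ^ (-(1 : ℝ) / 2) *
          ((Real.cosh a) ^ 2 * v ^ 2 - 1) ^ (-(3 : ℝ) / 2)) a ∧
      -(Real.sinh a) * (∫ v in Ioi (1 : ℝ), (v ^ (2 * q) - 1) ^ (-(1 : ℝ) / 2) *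
          ((Real.cosh a) ^ 2 * v ^ 2 - 1) ^ (-(3 : ℝ) / 2)) < 0 := by
  have hderiv : ∀ a ∈ Ioi (0 : ℝ), HasDerivAt h _ a := fun a ha =>
    funext hdef ▸ hasDerivAt_cosh_mul_integral (by positivity : 0 < 2 * q) ha
  have hneg : ∀ a ∈ Ioi (0 : ℝ), -sinh a * ∫ v in Ioi (1 : ℝ), (v ^ (2 * q) - 1) ^ (-(1 : ℝ) / 2) *
      (cosh a ^ 2 * v ^ 2 - 1) ^ (-(3 : ℝ) / 2) < 0 := fun a (ha : 0 < a) =>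
    mul_neg_of_neg_of_pos (neg_neg_of_pos (sinh_pos_iff.2 ha))
      (integral_rpow_sub_one_rpow_neg_half_mul_rpow_pos (by positivity) (one_lt_cosh.2 ha.ne')
        (by norm_num))
  refine ⟨strictAntiOn_of_deriv_neg (convex_Ioi 0)
    (fun x hx => (hderiv x hx).continuousAt.continuousWithinAt) fun x hx => ?_,
    fun a ha => ⟨hderiv a ha, hneg a ha⟩⟩
  rw [interior_Ioi] at hx
  exact (hderiv x hx).deriv ▸ hneg x hx
end

section
/- For q > 0, h(a) = cosh(a) · ∫_1^∞ (v^{2q}-1)^{-1/2} (cosh²(a)·v² - 1)^{-1/2} dv tends to +∞ as a → 0⁺. -/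
open Real MeasureTheory Set Filter

-- linear lower bound for v^(2q) - 1 on (1,2]
lemma aux_lin_lower (q : ℝ) (hq : 0 < q) :
    ∃ m : ℝ, 0 < m ∧ ∀ v ∈ Ioc (1:ℝ) 2, m * (v - 1) ≤ v ^ (2*q) - 1 := by
  rcases le_or_gt 1 (2*q) with hc | hc
  · refine ⟨2*q, by linarith, fun v hv => ?_⟩
    have h1 : (1:ℝ) < v := hv.1
    have := one_add_mul_self_le_rpow_one_add (s := v - 1) (by linarith) hc
    have hv1 : 1 + (v-1) = v := by ring
    rw [hv1] at this
    linarith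
  · refine ⟨2 ^ (2*q) - 1, ?_, fun v hv => ?_⟩
    · have : (1:ℝ) < 2 ^ (2*q) := (Real.one_lt_rpow_iff_of_pos (by norm_num)).mpr (Or.inl ⟨by norm_num, by linarith⟩)
      linarith
    · have h1 : (1:ℝ) < v := hv.1
      have h2 : v ≤ 2 := hv.2
      have hcon := (Real.strictConcaveOn_rpow (p := 2*q) (by linarith) hc).concaveOn
      have key := hcon.2 (show (1:ℝ) ∈ Ici (0:ℝ) by norm_num)
        (show (2:ℝ) ∈ Ici (0:ℝ) by norm_num)
        (show (0:ℝ) ≤ 2 - v by linarith) (show (0:ℝ) ≤ v - 1 by linarith)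
        (show (2 - v) + (v - 1) = 1 by ring)
      simp only [smul_eq_mul] at key
      have e1 : (2 - v) * 1 + (v - 1) * 2 = v := by ring
      rw [e1, Real.one_rpow] at key
      nlinarith
-- linear upper bound for v^(2q) - 1 on (1,2]
lemma aux_lin_upper (q : ℝ) (hq : 0 < q) :
    ∃ K : ℝ, 0 < K ∧ ∀ v ∈ Ioc (1:ℝ) 2, v ^ (2*q) - 1 ≤ K * (v - 1) := by
  set n : ℕ := ⌈2*q⌉₊ with hn
  have hn1 : 1 ≤ n := Nat.one_le_ceil_iff.mpr (by linarith)
  refine ⟨(n:ℝ) * 2^n, by positivity, fun v hv => ?_⟩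
  have h1 : (1:ℝ) < v := hv.1
  have h2 : v ≤ 2 := hv.2
  have hr : v ^ (2*q) ≤ v ^ (n:ℝ) :=
    Real.rpow_le_rpow_of_exponent_le h1.le (Nat.le_ceil _)
  rw [Real.rpow_natCast] at hr
  have hgeom : (∑ i ∈ Finset.range n, v ^ i) * (v - 1) = v ^ n - 1 := geom_sum_mul v n
  have hsum : (∑ i ∈ Finset.range n, v ^ i) ≤ (n:ℝ) * 2^n := by
    calc (∑ i ∈ Finset.range n, v ^ i) ≤ ∑ i ∈ Finset.range n, (2:ℝ)^n := by
          refine Finset.sum_le_sum fun i hi => ?_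
          calc v ^ i ≤ (2:ℝ) ^ i := pow_le_pow_left₀ (by linarith) h2 i
            _ ≤ (2:ℝ) ^ n := pow_le_pow_right₀ (by norm_num) (Finset.mem_range.mp hi).le
      _ = (n:ℝ) * 2^n := by simp [Finset.sum_const, mul_comm]
  have : v ^ n - 1 ≤ ((n:ℝ) * 2^n) * (v - 1) := by
    rw [← hgeom]
    exact mul_le_mul_of_nonneg_right hsum (by linarith)
  linarith

-- continuity of the integrand on Ioi 1
lemma aux_cont (q c : ℝ) (hq : 0 < q) (hc : 1 ≤ c) :
    ContinuousOn (fun v : ℝ => (v ^ (2*q) - 1) ^ (-(1:ℝ)/2) * (c^2 * v^2 - 1) ^ (-(1:ℝ)/2))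
      (Ioi (1:ℝ)) := by
  have hpos1 : ∀ v ∈ Ioi (1:ℝ), v ^ (2*q) - 1 ≠ 0 := by
    intro v hv
    have : (1:ℝ) < v ^ (2*q) :=
      (Real.one_lt_rpow_iff_of_pos (by linarith [mem_Ioi.mp hv])).mpr
        (Or.inl ⟨mem_Ioi.mp hv, by linarith⟩)
    linarith
  have hpos2 : ∀ v ∈ Ioi (1:ℝ), c^2 * v^2 - 1 ≠ 0 := by
    intro v hv
    have h1 : (1:ℝ) < v := mem_Ioi.mp hv
    have h2 : 1 < c * v := by nlinarith
    nlinarith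
  apply ContinuousOn.mul
  · apply ContinuousOn.rpow_const
    · exact (continuousOn_id.rpow_const fun x hx =>
        Or.inl (ne_of_gt (lt_trans zero_lt_one hx))).sub continuousOn_const
    · exact fun v hv => Or.inl (hpos1 v hv)
  · apply ContinuousOn.rpow_const
    · exact (continuousOn_const.mul (continuousOn_pow 2)).sub continuousOn_const
    · exact fun v hv => Or.inl (hpos2 v hv)

lemma aux_pos1 (q : ℝ) (hq : 0 < q) : ∀ v : ℝ, 1 < v → 0 < v ^ (2*q) - 1 := by
  intro v hv
  have : (1:ℝ) < v ^ (2*q) :=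
    (Real.one_lt_rpow_iff_of_pos (by linarith)).mpr (Or.inl ⟨hv, by linarith⟩)
  linarith

lemma aux_integrable (q : ℝ) (hq : 0 < q) (c : ℝ) (hc1 : 1 < c) :
    IntegrableOn (fun v : ℝ => (v ^ (2*q) - 1) ^ (-(1:ℝ)/2) * (c^2 * v^2 - 1) ^ (-(1:ℝ)/2))
      (Ioi (1:ℝ)) := by
  obtain ⟨m, hm, hmle⟩ := aux_lin_lower q hq
  have hcont : ContinuousOn
      (fun v : ℝ => (v ^ (2*q) - 1) ^ (-(1:ℝ)/2) * (c^2 * v^2 - 1) ^ (-(1:ℝ)/2)) (Ioi 1) :=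
    aux_cont q c hq hc1.le
  have hbase1 := aux_pos1 q hq
  have hbase2 : ∀ v : ℝ, 1 < v → 0 < c^2 * v^2 - 1 := by
    intro v hv
    have h : 1 < c * v := by nlinarith
    have h2 := mul_self_lt_mul_self (by norm_num : (0:ℝ) ≤ 1) h
    nlinarith [h2]
  have hIoi : Ioc (1:ℝ) 2 ∪ Ioi 2 = Ioi 1 := Ioc_union_Ioi_eq_Ioi one_le_two
  have h12 : Ioc (1:ℝ) 2 ⊆ Ioi 1 := Ioc_subset_Ioi_self
  have h2i : Ioi (2:ℝ) ⊆ Ioi 1 := Ioi_subset_Ioi one_le_two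
  rw [← hIoi]
  refine IntegrableOn.union ?_ ?_
  · -- on Ioc 1 2
    set C₁ : ℝ := m ^ (-(1:ℝ)/2) * (c^2 - 1) ^ (-(1:ℝ)/2) with hC
    have h1 : IntervalIntegrable (fun x : ℝ => (x - 1) ^ (-(1:ℝ)/2)) volume 1 2 := by
      have h0 : IntervalIntegrable (fun x : ℝ => x ^ (-(1:ℝ)/2)) volume 0 1 :=
        intervalIntegral.intervalIntegrable_rpow' (by norm_num)
      have h2 := h0.comp_sub_right 1
      simp only [zero_add, one_add_one_eq_two] at h2
      exact h2
    have hg : IntegrableOn (fun v : ℝ => C₁ * (v - 1) ^ (-(1:ℝ)/2)) (Ioc 1 2) :=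
      ((intervalIntegrable_iff_integrableOn_Ioc_of_le (by norm_num : (1:ℝ) ≤ 2)).mp
        h1).const_mul C₁
    refine hg.mono' ((hcont.mono h12).aestronglyMeasurable measurableSet_Ioc) ?_
    rw [ae_restrict_iff' measurableSet_Ioc]
    refine ae_of_all _ fun v hv => ?_
    have hv1 : (1:ℝ) < v := hv.1
    have hv2 : v ≤ 2 := hv.2
    have hb1 := hbase1 v hv1
    have hb2 := hbase2 v hv1
    have hmv : 0 < m * (v - 1) := mul_pos hm (by linarith)
    have hc2 : 0 < c^2 - 1 := by nlinarith
    have hA : (v ^ (2*q) - 1) ^ (-(1:ℝ)/2) ≤ (m * (v - 1)) ^ (-(1:ℝ)/2) :=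
      Real.rpow_le_rpow_of_nonpos hmv (hmle v hv) (by norm_num)
    have hB : (c^2 * v^2 - 1) ^ (-(1:ℝ)/2) ≤ (c^2 - 1) ^ (-(1:ℝ)/2) := by
      refine Real.rpow_le_rpow_of_nonpos hc2 ?_ (by norm_num)
      have hsq : 1 ≤ v^2 := by nlinarith
      nlinarith [mul_nonneg (sq_nonneg c) (sub_nonneg.mpr hsq)]
    have hnn : 0 ≤ (v ^ (2*q) - 1) ^ (-(1:ℝ)/2) * (c^2 * v^2 - 1) ^ (-(1:ℝ)/2) :=
      mul_nonneg (Real.rpow_nonneg hb1.le _) (Real.rpow_nonneg hb2.le _)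
    rw [Real.norm_eq_abs, abs_of_nonneg hnn]
    calc (v ^ (2*q) - 1) ^ (-(1:ℝ)/2) * (c^2 * v^2 - 1) ^ (-(1:ℝ)/2)
        ≤ (m * (v - 1)) ^ (-(1:ℝ)/2) * (c^2 - 1) ^ (-(1:ℝ)/2) :=
          mul_le_mul hA hB (Real.rpow_nonneg hb2.le _) (Real.rpow_nonneg hmv.le _)
      _ = C₁ * (v - 1) ^ (-(1:ℝ)/2) := by
          rw [Real.mul_rpow hm.le (by linarith : (0:ℝ) ≤ v - 1), hC]; ring
  · -- on Ioi 2
    set t : ℝ := (2:ℝ) ^ (2*q) with htdef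
    have ht : 1 < t :=
      (Real.one_lt_rpow_iff_of_pos (by norm_num)).mpr (Or.inl ⟨by norm_num, by linarith⟩)
    have htpos : 0 < t := by linarith
    have hti : 0 < 1 - t⁻¹ := by
      have : t⁻¹ < 1 := inv_lt_one_of_one_lt₀ ht
      linarith
    set C₂ : ℝ := (1 - t⁻¹) ^ (-(1:ℝ)/2) * ((3:ℝ)/4) ^ (-(1:ℝ)/2) with hC2
    have hg : IntegrableOn (fun v : ℝ => C₂ * v ^ (-(q+1))) (Ioi 2) :=
      (integrableOn_Ioi_rpow_of_lt (by linarith) (by norm_num)).const_mul C₂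
    refine hg.mono' ((hcont.mono h2i).aestronglyMeasurable measurableSet_Ioi) ?_
    rw [ae_restrict_iff' measurableSet_Ioi]
    refine ae_of_all _ fun v hv => ?_
    have hv2 : (2:ℝ) < v := hv
    have hv1 : (1:ℝ) < v := by linarith
    have hv0 : (0:ℝ) ≤ v := by linarith
    have hb1 := hbase1 v hv1
    have hb2 := hbase2 v hv1
    have hrt : t ≤ v ^ (2*q) := Real.rpow_le_rpow (by norm_num) hv2.le (by linarith)
    have hvq : (0:ℝ) < v ^ (2*q) := by positivity
    have hA1 : (1 - t⁻¹) * v ^ (2*q) ≤ v ^ (2*q) - 1 := by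
      have h3 : t⁻¹ * t = 1 := inv_mul_cancel₀ (ne_of_gt htpos)
      have h4 : t⁻¹ * t ≤ t⁻¹ * v ^ (2*q) :=
        mul_le_mul_of_nonneg_left hrt (by positivity)
      nlinarith
    have hA : (v ^ (2*q) - 1) ^ (-(1:ℝ)/2) ≤ ((1 - t⁻¹) * v ^ (2*q)) ^ (-(1:ℝ)/2) :=
      Real.rpow_le_rpow_of_nonpos (by positivity) hA1 (by norm_num)
    have hB1 : (3:ℝ)/4 * v^2 ≤ c^2 * v^2 - 1 := by
      have h4 : 4 ≤ v^2 := by nlinarith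
      have hc2 : 1 ≤ c^2 := by nlinarith
      nlinarith [mul_nonneg (sub_nonneg.mpr hc2) (sq_nonneg v)]
    have hB : (c^2 * v^2 - 1) ^ (-(1:ℝ)/2) ≤ ((3:ℝ)/4 * v^2) ^ (-(1:ℝ)/2) :=
      Real.rpow_le_rpow_of_nonpos (by positivity) hB1 (by norm_num)
    have hnn : 0 ≤ (v ^ (2*q) - 1) ^ (-(1:ℝ)/2) * (c^2 * v^2 - 1) ^ (-(1:ℝ)/2) :=
      mul_nonneg (Real.rpow_nonneg hb1.le _) (Real.rpow_nonneg hb2.le _)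
    rw [Real.norm_eq_abs, abs_of_nonneg hnn]
    have eA : ((1 - t⁻¹) * v ^ (2*q)) ^ (-(1:ℝ)/2)
        = (1 - t⁻¹) ^ (-(1:ℝ)/2) * v ^ (-q) := by
      rw [Real.mul_rpow hti.le (Real.rpow_nonneg hv0 _),
        ← Real.rpow_mul hv0, show 2*q*(-(1:ℝ)/2) = -q by ring]
    have eB : ((3:ℝ)/4 * v^2) ^ (-(1:ℝ)/2) = ((3:ℝ)/4) ^ (-(1:ℝ)/2) * v ^ (-(1:ℝ)) := by
      rw [Real.mul_rpow (by norm_num) (by positivity), ← Real.rpow_natCast v 2,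
        ← Real.rpow_mul hv0]
      norm_num
    calc (v ^ (2*q) - 1) ^ (-(1:ℝ)/2) * (c^2 * v^2 - 1) ^ (-(1:ℝ)/2)
        ≤ ((1 - t⁻¹) * v ^ (2*q)) ^ (-(1:ℝ)/2) * ((3:ℝ)/4 * v^2) ^ (-(1:ℝ)/2) :=
          mul_le_mul hA hB (Real.rpow_nonneg hb2.le _) (Real.rpow_nonneg (by positivity) _)
      _ = C₂ * v ^ (-(q+1)) := by
          rw [eA, eB, hC2, show -(q+1) = -q + -(1:ℝ) by ring, Real.rpow_add (by linarith : (0:ℝ) < v)]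
          ring

lemma aux_pos2 (c v : ℝ) (hc : 1 < c) (hv : 1 < v) : 0 < c^2 * v^2 - 1 := by
  have h : 1 < c * v := by nlinarith
  have h2 := mul_self_lt_mul_self (by norm_num : (0:ℝ) ≤ 1) h
  nlinarith [h2]

lemma aux_lower (q : ℝ) (hq : 0 < q) :
    ∃ B : ℝ, 0 < B ∧ ∀ c : ℝ, 1 < c → c < 2 →
      B * (-Real.log (c - 1)) ≤
        c * ∫ v in Ioi (1:ℝ), (v ^ (2*q) - 1) ^ (-(1:ℝ)/2) * (c^2 * v^2 - 1) ^ (-(1:ℝ)/2) := by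
  obtain ⟨K, hK, hKle⟩ := aux_lin_upper q hq
  refine ⟨(15*K) ^ (-(1:ℝ)/2), by positivity, fun c hc1 hc2 => ?_⟩
  set B : ℝ := (15*K) ^ (-(1:ℝ)/2) with hB
  have hBpos : 0 < B := by rw [hB]; positivity
  set f : ℝ → ℝ := fun v => (v ^ (2*q) - 1) ^ (-(1:ℝ)/2) * (c^2 * v^2 - 1) ^ (-(1:ℝ)/2) with hf
  set δ : ℝ := c - 1 with hδ
  have hδ0 : 0 < δ := by rw [hδ]; linarith
  have hδ1 : δ < 1 := by rw [hδ]; linarith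
  have hsub : Ioc (1+δ) 2 ⊆ Ioi (1:ℝ) := fun x hx => lt_trans (by linarith) hx.1
  have hint : IntegrableOn f (Ioi 1) := aux_integrable q hq c hc1
  have hnonneg : ∀ v : ℝ, 1 < v → 0 ≤ f v := fun v hv =>
    mul_nonneg (Real.rpow_nonneg (aux_pos1 q hq v hv).le _)
      (Real.rpow_nonneg (aux_pos2 c v hc1 hv).le _)
  -- pointwise lower bound on Ioc (1+δ) 2
  have hpt : ∀ v ∈ Ioc (1+δ) 2, B * (v-1)⁻¹ ≤ f v := by
    intro v hv
    have hv1 : 1 + δ < v := hv.1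
    have hv2 : v ≤ 2 := hv.2
    have hv1' : 1 < v := by linarith
    have hvm : v ∈ Ioc (1:ℝ) 2 := ⟨hv1', hv2⟩
    have hb1 := aux_pos1 q hq v hv1'
    have hb2 := aux_pos2 c v hc1 hv1'
    have hA : (K*(v-1)) ^ (-(1:ℝ)/2) ≤ (v ^ (2*q) - 1) ^ (-(1:ℝ)/2) :=
      Real.rpow_le_rpow_of_nonpos hb1 (hKle v hvm) (by norm_num)
    have hB2 : (15*(v-1)) ^ (-(1:ℝ)/2) ≤ (c^2 * v^2 - 1) ^ (-(1:ℝ)/2) := by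
      refine Real.rpow_le_rpow_of_nonpos hb2 ?_ (by norm_num)
      have hcv : (1:ℝ) < c * v := by nlinarith
      have h1 : c * v - 1 ≤ 3 * (v - 1) := by nlinarith
      have h2 : c * v + 1 ≤ 5 := by nlinarith
      have h3 : (c*v - 1) * (c*v + 1) ≤ (3*(v-1)) * 5 :=
        mul_le_mul h1 h2 (by linarith) (by linarith)
      nlinarith [h3]
    have hprod : (K*(v-1)) ^ (-(1:ℝ)/2) * (15*(v-1)) ^ (-(1:ℝ)/2) ≤ f v :=
      mul_le_mul hA hB2 (Real.rpow_nonneg (by nlinarith) _) (Real.rpow_nonneg hb1.le _)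
    have heq : (K*(v-1)) ^ (-(1:ℝ)/2) * (15*(v-1)) ^ (-(1:ℝ)/2) = B * (v-1)⁻¹ := by
      rw [← Real.mul_rpow (by nlinarith) (by nlinarith),
        show K*(v-1) * (15*(v-1)) = (15*K) * (v-1)^2 by ring,
        Real.mul_rpow (by positivity) (by positivity), ← hB,
        ← Real.rpow_natCast (v-1) 2, ← Real.rpow_mul (by linarith)]
      norm_num
      exact Or.inl (Real.rpow_neg_one _)
    rw [← heq]; exact hprod
  -- the explicit integral
  have hIoc : ∫ v in Ioc (1+δ) 2, (v-1)⁻¹ = -Real.log δ := by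
    rw [← intervalIntegral.integral_of_le (by linarith : (1:ℝ)+δ ≤ 2)]
    rw [show (fun v : ℝ => (v-1)⁻¹) = fun v : ℝ => (fun x : ℝ => x⁻¹) (v - 1) from rfl]
    rw [intervalIntegral.integral_comp_sub_right (fun x : ℝ => x⁻¹) 1]
    rw [show (1:ℝ)+δ-1 = δ by ring, show (2:ℝ)-1 = 1 by norm_num]
    rw [integral_inv_of_pos hδ0 one_pos,
      Real.log_div one_ne_zero (ne_of_gt hδ0), Real.log_one]
    ring
  have hint1 : IntegrableOn (fun v : ℝ => B * (v-1)⁻¹) (Ioc (1+δ) 2) := by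
    refine (ContinuousOn.integrableOn_Icc ?_).mono_set Ioc_subset_Icc_self
    exact continuousOn_const.mul ((continuousOn_id.sub continuousOn_const).inv₀
      fun x hx => by have := hx.1; intro hcon; simp at hcon; linarith)
  have step1 : B * (-Real.log δ) = ∫ v in Ioc (1+δ) 2, B * (v-1)⁻¹ := by
    rw [MeasureTheory.integral_const_mul, hIoc]
  have step2 : (∫ v in Ioc (1+δ) 2, B * (v-1)⁻¹) ≤ ∫ v in Ioc (1+δ) 2, f v :=
    setIntegral_mono_on hint1 (hint.mono_set hsub) measurableSet_Ioc hpt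
  have step3 : (∫ v in Ioc (1+δ) 2, f v) ≤ ∫ v in Ioi 1, f v := by
    refine setIntegral_mono_set hint ?_ (HasSubset.Subset.eventuallyLE hsub)
    filter_upwards [ae_restrict_mem measurableSet_Ioi] with v hv
    exact hnonneg v hv
  have step4 : (∫ v in Ioi 1, f v) ≤ c * ∫ v in Ioi 1, f v :=
    le_mul_of_one_le_left (setIntegral_nonneg measurableSet_Ioi fun v hv => hnonneg v hv) hc1.le
  calc B * (-Real.log δ) = ∫ v in Ioc (1+δ) 2, B * (v-1)⁻¹ := step1
    _ ≤ ∫ v in Ioc (1+δ) 2, f v := step2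
    _ ≤ ∫ v in Ioi 1, f v := step3
    _ ≤ c * ∫ v in Ioi 1, f v := step4

theorem stmt_5 (q : ℝ) (hq : 0 < q)
    (h : ℝ → ℝ)
    (hdef : ∀ a : ℝ, h a = Real.cosh a *
      ∫ v in Ioi (1 : ℝ), (v ^ (2 * q) - 1) ^ (-(1 : ℝ) / 2) *
        ((Real.cosh a) ^ 2 * v ^ 2 - 1) ^ (-(1 : ℝ) / 2)) :
    Tendsto h (nhdsWithin 0 (Ioi 0)) atTop := by
  obtain ⟨B, hB, hbound⟩ := aux_lower q hq
  have hev : ∀ᶠ a in nhdsWithin 0 (Ioi 0),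
      B * (-Real.log (Real.cosh a - 1)) ≤ h a := by
    filter_upwards [Ioo_mem_nhdsGT_of_mem
      (⟨le_refl (0:ℝ), by norm_num⟩ : (0:ℝ) ∈ Ico (0:ℝ) (1/2))] with a ha
    have ha0 : 0 < a := ha.1
    have ha2 : a < 1/2 := ha.2
    have hc1 : 1 < Real.cosh a := Real.one_lt_cosh.mpr (ne_of_gt ha0)
    have hc2 : Real.cosh a < 2 := by
      rw [Real.cosh_eq]
      have h1 : Real.exp a < 2 := by
        have he : Real.exp a < Real.exp (1/2) := Real.exp_lt_exp.mpr ha2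
        have h2 : Real.exp (1/2) * Real.exp (1/2) = Real.exp 1 := by
          rw [← Real.exp_add]; norm_num
        nlinarith [Real.exp_pos (1/2), Real.exp_one_lt_d9]
      have h2 : Real.exp (-a) < 2 := by
        calc Real.exp (-a) ≤ Real.exp 0 := Real.exp_le_exp.mpr (by linarith)
          _ = 1 := Real.exp_zero
          _ < 2 := one_lt_two
      linarith
    rw [hdef a]
    exact hbound (Real.cosh a) hc1 hc2
  refine tendsto_atTop_mono' _ hev ?_
  have t1 : Tendsto (fun a => Real.cosh a - 1) (nhdsWithin 0 (Ioi 0))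
      (nhdsWithin 0 (Ioi 0)) := by
    rw [tendsto_nhdsWithin_iff]
    constructor
    · have hco : Tendsto (fun a : ℝ => Real.cosh a - 1) (nhds 0) (nhds (Real.cosh 0 - 1)) :=
        (Real.continuous_cosh.sub continuous_const).tendsto 0
      simpa using hco.mono_left nhdsWithin_le_nhds
    · filter_upwards [self_mem_nhdsWithin] with a ha
      have : 1 < Real.cosh a := Real.one_lt_cosh.mpr (ne_of_gt ha)
      simpa using this
  have t2 : Tendsto (fun a => -Real.log (Real.cosh a - 1)) (nhdsWithin 0 (Ioi 0)) atTop :=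
    tendsto_neg_atBot_atTop.comp (Real.tendsto_log_nhdsGT_zero.comp t1)
  exact Tendsto.const_mul_atTop hB t2
end

section
/- Let n > r ≥ 1 be integers, d > 1, ρ > 0 with cosh(ρ)^{2(n−r)/r} > d². With λ'(ρ) = d(cosh(ρ)^{2(n−r)/r} − d²)^{-1/2}, λ'' given by the ODE λ'' = −((n−r)/(rd²))λ'³ tanh(ρ) cosh(ρ)^{2(n−r)/r}, and κ₁ = λ''(1+λ'²)^{-3/2}, κ₂ = λ'(1+λ'²)^{-1/2} tanh(ρ), the normalized j-th symmetric function H_j of (κ₁, κ₂,…,κ₂) satisfies: H_j > 0 for 1 ≤ j < r, H_r = 0, and H_j < 0 for r < j ≤ n. -/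
/-!
Since `1 + λ'² = cosh(ρ)^{2(n-r)/r} / (cosh(ρ)^{2(n-r)/r} - d²)`, the ODE for `λ''` gives
`κ₁ = -((n - r) / r) κ₂`, with `κ₂ > 0`. Expanding `e_j(κ₁, κ₂, …, κ₂)` along `κ₁` gives
`H_j = ((n - j) κ₂ + j κ₁) κ₂^{j-1} / n`, which becomes `H_j = (1 - j / r) κ₂^j`:
its sign is that of `r - j`.
-/

open Real

namespace Multiset

variable {R : Type*} [CommSemiring R]

theorem esymm_cons_succ (a : R) (s : Multiset R) (k : ℕ) :
    (a ::ₘ s).esymm (k + 1) = s.esymm (k + 1) + a * s.esymm k := by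
  simp only [esymm, powersetCard_cons, map_add, sum_add, map_map, Function.comp_def, prod_cons,
    sum_map_mul_left]

theorem esymm_replicate (m k : ℕ) (b : R) :
    (replicate m b).esymm k = m.choose k * b ^ k := by
  have hprod : ∀ t ∈ (replicate m b).powersetCard k, t.prod = b ^ k := by
    intro t ht
    rw [mem_powersetCard] at ht
    rw [eq_replicate_of_mem fun x hx => eq_of_mem_replicate (mem_of_le ht.1 hx), prod_replicate,
      ht.2]
  rw [esymm, map_congr rfl hprod, map_const', sum_replicate, card_powersetCard, card_replicate,
    nsmul_eq_mul]

end Multiset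

theorem esymm_cons_replicate_div_choose {K : Type*} [Field K] [CharZero K] {n k : ℕ}
    (hk : k + 1 ≤ n) (a b : K) :
    ((n.choose (k + 1) : K))⁻¹ * (a ::ₘ Multiset.replicate (n - 1) b).esymm (k + 1)
      = ((n - (k + 1)) * b + (k + 1) * a) * b ^ k / n := by
  obtain ⟨m, rfl⟩ : ∃ m, n = m + 1 := ⟨n - 1, by omega⟩
  have hkm : k ≤ m := by omega
  have hpascal : ((m + 1 : ℕ).choose (k + 1) : K) * (k + 1) = (m + 1) * m.choose k := by
    exact_mod_cast (Nat.add_one_mul_choose_eq m k).symm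
  have hsucc : (m.choose (k + 1) : K) * (m + 1) = (m + 1 : ℕ).choose (k + 1) * (m - k) := by
    rw [← Nat.cast_sub hkm, ← Nat.add_sub_add_right m 1 k]
    exact_mod_cast Nat.choose_mul_succ_eq m (k + 1)
  have hchoose : ((m + 1 : ℕ).choose (k + 1) : K) ≠ 0 := by
    exact_mod_cast (Nat.choose_pos hk).ne'
  rw [Nat.add_sub_cancel, Multiset.esymm_cons_succ, Multiset.esymm_replicate,
    Multiset.esymm_replicate]
  field_simp
  push_cast
  linear_combination b ^ (k + 1) * hsucc - a * b ^ k * hpascal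

theorem rpow_neg_three_halves {x : ℝ} (hx : 0 < x) :
    x ^ (-(3 : ℝ) / 2) = x⁻¹ * x ^ (-(1 : ℝ) / 2) := by
  rw [← rpow_neg_one, ← rpow_add hx]
  norm_num

theorem rpow_neg_half_sq {x : ℝ} (hx : 0 ≤ x) : (x ^ (-(1 : ℝ) / 2)) ^ 2 = x⁻¹ := by
  rw [← rpow_natCast, ← rpow_mul hx]
  norm_num [rpow_neg_one]

theorem principal_curvatures_proportional {a b c d t l' l'' κ₁ κ₂ : ℝ}
    (hd : d ≠ 0) (hc : d ^ 2 < c)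
    (hl' : l' = d * (c - d ^ 2) ^ (-(1 : ℝ) / 2))
    (hl'' : l'' = -(a / (b * d ^ 2)) * l' ^ 3 * t * c)
    (hκ₁ : κ₁ = l'' * (1 + l' ^ 2) ^ (-(3 : ℝ) / 2))
    (hκ₂ : κ₂ = l' * (1 + l' ^ 2) ^ (-(1 : ℝ) / 2) * t) :
    κ₁ = -(a / b) * κ₂ := by
  have hgap : 0 < c - d ^ 2 := sub_pos.2 hc
  have hsq : l' ^ 2 = d ^ 2 / (c - d ^ 2) := by
    rw [hl', mul_pow, rpow_neg_half_sq hgap.le, div_eq_mul_inv]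
  have hone_add : 1 + l' ^ 2 = c / (c - d ^ 2) := by
    rw [hsq]; field_simp; ring
  have hc0 : c ≠ 0 := by nlinarith [sq_nonneg d]
  rw [hκ₁, hκ₂, rpow_neg_three_halves (by positivity), hl'',
    show l' ^ 3 = l' * l' ^ 2 by ring, hone_add, hsq]
  field_simp

theorem stmt_9 (n r : ℕ) (hr : 1 ≤ r) (hrn : r < n)
    (d ρ : ℝ) (hd : 1 < d) (hρ : 0 < ρ)
    (hcosh : Real.cosh ρ ^ (2 * ((n : ℝ) - r) / r) > d ^ 2)
    (l' l'' κ₁ κ₂ : ℝ)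
    (hl' : l' = d * (Real.cosh ρ ^ (2 * ((n : ℝ) - r) / r) - d ^ 2) ^ (-(1 : ℝ) / 2))
    (hl'' : l'' = -(((n : ℝ) - r) / (r * d ^ 2)) * l' ^ 3 * Real.tanh ρ *
      Real.cosh ρ ^ (2 * ((n : ℝ) - r) / r))
    (hκ₁ : κ₁ = l'' * (1 + l' ^ 2) ^ (-(3 : ℝ) / 2))
    (hκ₂ : κ₂ = l' * (1 + l' ^ 2) ^ (-(1 : ℝ) / 2) * Real.tanh ρ)
    (H : ℕ → ℝ)
    (hH : ∀ k : ℕ, H k =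
      ((n.choose k : ℝ))⁻¹ * (κ₁ ::ₘ Multiset.replicate (n - 1) κ₂).esymm k) :
    (∀ j : ℕ, 1 ≤ j → j < r → 0 < H j) ∧
    H r = 0 ∧
    (∀ j : ℕ, r < j → j ≤ n → H j < 0) := by
  have hr₀ : (0 : ℝ) < r := by exact_mod_cast hr
  have hd₀ : 0 < d := by linarith
  have htanh : 0 < tanh ρ := by
    rw [tanh_eq_sinh_div_cosh]; exact div_pos (sinh_pos_iff.2 hρ) (cosh_pos ρ)
  have hl'₀ : 0 < l' := hl' ▸ mul_pos hd₀ (rpow_pos_of_pos (sub_pos.2 hcosh) _)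
  have hκ₂₀ : 0 < κ₂ := hκ₂ ▸ mul_pos (mul_pos hl'₀ (rpow_pos_of_pos (by positivity) _)) htanh
  have hκ₁κ₂ : κ₁ = -(((n : ℝ) - r) / r) * κ₂ :=
    principal_curvatures_proportional hd₀.ne' hcosh hl' hl'' hκ₁ hκ₂
  have hHj : ∀ j, 1 ≤ j → j ≤ n → H j = (1 - j / r) * κ₂ ^ j := by
    intro j hj hjn
    have hn₀ : (n : ℝ) ≠ 0 := by exact_mod_cast (by omega : n ≠ 0)
    obtain ⟨k, rfl⟩ := Nat.exists_eq_add_of_le' hj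
    rw [hH, esymm_cons_replicate_div_choose hjn, hκ₁κ₂]
    field_simp
    push_cast
    ring
  refine ⟨fun j hj hjr => ?_, ?_, fun j hjr hjn => ?_⟩
  · have : (j : ℝ) / r < 1 := (div_lt_one hr₀).2 (by exact_mod_cast hjr)
    rw [hHj j hj (by omega)]
    exact mul_pos (by linarith) (pow_pos hκ₂₀ j)
  · rw [hHj r hr hrn.le, div_self hr₀.ne', sub_self, zero_mul]
  · have : 1 < (j : ℝ) / r := (one_lt_div hr₀).2 (by exact_mod_cast hjr)
    rw [hHj j (by omega) hjn]
    exact mul_neg_of_neg_of_pos (by linarith) (pow_pos hκ₂₀ j)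
end
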